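/- Let $u>0$ and let $g_F(x)=F^2\alpha\int_0^x \sqrt{w}\,e^{-(\beta\sqrt{w})^u}dw$. There exists a critical value $F_c>0$ such that: (i) if $0<F<F_c$ then $0$ is the only fixed point of $g_F$ on $[0,\infty)$; (ii) if $F>F_c$ then $g_F$ has exactly three fixed points $0<\ell_1<x^*$ on $[0,\infty)$. -/

import Mathlib

/-!
Write `H x = ∫₀ˣ f` with `f w = √w · exp (-(β √w) ^ u)`; the positive fixed points of `g F` are the
solutions of `H x / x = (F² α)⁻¹`. The profile `f` is `w ↦ β⁻¹ φ (β √w)` with `φ t = t e^{-t^u}`,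
so it vanishes at `0` and at infinity and is unimodal, with peak at `β √w = u^{-1/u}`.
Its running mean `H x / x` then also tends to `0` at both ends and is unimodal: its derivative has
the sign of `x f x - H x`, which is positive up to the peak of `f` and strictly decreasing beyond
it, and must become negative since otherwise the mean could not return to `0`. Hence every level
strictly between `0` and the maximum `M` of the mean is attained exactly twice, no level above `M`
is attained, and `F_c = (α M)^{-1/2}`.
-/

open Real MeasureTheory intervalIntegral Set Filter Topology

noncomputable def runningMean (f : ℝ → ℝ) (x : ℝ) : ℝ := (∫ t in (0 : ℝ)..x, f t) / x

noncomputable def meanGap (f : ℝ → ℝ) (x : ℝ) : ℝ := x * f x - ∫ t in (0 : ℝ)..x, f t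

section RunningMean

variable {f : ℝ → ℝ} {a m x y : ℝ}

theorem continuous_meanGap (hf : Continuous f) : Continuous (meanGap f) :=
  (continuous_id.mul hf).sub (continuous_primitive hf.intervalIntegrable 0)

theorem continuousOn_runningMean (hf : Continuous f) : ContinuousOn (runningMean f) (Ioi 0) :=
  (continuous_primitive hf.intervalIntegrable 0).continuousOn.div continuousOn_id
    fun _ hx => ne_of_gt hx

theorem hasDerivAt_runningMean (hf : Continuous f) (hx : x ≠ 0) :
    HasDerivAt (runningMean f) (meanGap f x / x ^ 2) x := by
  have h : HasDerivAt (runningMean f) ((f x * x - (∫ t in (0 : ℝ)..x, f t) * 1) / x ^ 2) x :=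
    (hf.integral_hasStrictDerivAt 0 x).hasDerivAt.div (hasDerivAt_id' x) hx
  rw [meanGap]
  convert h using 2
  ring

theorem tendsto_runningMean_nhdsGT_zero (hf : Continuous f) :
    Tendsto (runningMean f) (𝓝[>] 0) (𝓝 (f 0)) := by
  have h := hasDerivAt_iff_tendsto_slope.mp (hf.integral_hasStrictDerivAt 0 0).hasDerivAt
  refine (h.mono_left (nhdsWithin_mono _ fun x hx => ne_of_gt hx)).congr fun x => ?_
  simp [slope_def_field, runningMean]

theorem tendsto_runningMean_atTop (hf : Continuous f) (hlim : Tendsto f atTop (𝓝 0)) :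
    Tendsto (runningMean f) atTop (𝓝 0) := by
  rw [Metric.tendsto_atTop]
  intro ε hε
  obtain ⟨Y, hY⟩ := eventually_atTop.mp
    ((hlim.eventually (Metric.ball_mem_nhds 0 (half_pos hε))).and (eventually_ge_atTop 0))
  have hhead : Tendsto (fun x => (∫ t in (0 : ℝ)..Y, f t) / x) atTop (𝓝 0) :=
    tendsto_const_nhds.div_atTop tendsto_id
  obtain ⟨X, hX⟩ := eventually_atTop.mp
    ((hhead.eventually (Metric.ball_mem_nhds 0 (half_pos hε))).and (eventually_gt_atTop Y))
  refine ⟨X, fun x hx => ?_⟩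
  obtain ⟨hxhead, hYx⟩ := hX x hx
  have hY0 : 0 ≤ Y := (hY Y le_rfl).2
  have hx0 : 0 < x := hY0.trans_lt hYx
  have htail : |∫ t in Y..x, f t| ≤ ε / 2 * x := by
    rw [← Real.norm_eq_abs]
    refine (intervalIntegral.norm_integral_le_of_norm_le_const (C := ε / 2) fun t ht => ?_).trans ?_
    · exact (mem_ball_zero_iff.mp (hY t (uIoc_of_le hYx.le ▸ ht).1.le).1).le
    · rw [abs_of_pos (sub_pos.2 hYx)]; nlinarith
  have hsplit : runningMean f x = (∫ t in (0 : ℝ)..Y, f t) / x + (∫ t in Y..x, f t) / x := by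
    rw [runningMean, ← add_div,
      integral_add_adjacent_intervals (hf.intervalIntegrable _ _) (hf.intervalIntegrable _ _)]
  rw [Real.dist_eq, sub_zero] at hxhead ⊢
  rw [hsplit]
  calc |(∫ t in (0 : ℝ)..Y, f t) / x + (∫ t in Y..x, f t) / x|
      ≤ |(∫ t in (0 : ℝ)..Y, f t) / x| + |∫ t in Y..x, f t| / x := by
        rw [← abs_of_pos hx0, ← abs_div, abs_of_pos hx0]; exact abs_add_le _ _
    _ < ε / 2 + ε / 2 := add_lt_add_of_lt_of_le hxhead ((div_le_iff₀ hx0).mpr htail)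
    _ = ε := add_halves ε

theorem strictMonoOn_runningMean (hf : Continuous f)
    (hgap : ∀ x ∈ Ioo 0 a, 0 < meanGap f x) : StrictMonoOn (runningMean f) (Ioc 0 a) := by
  refine strictMonoOn_of_deriv_pos (convex_Ioc 0 a)
    ((continuousOn_runningMean hf).mono Ioc_subset_Ioi_self) fun x hx => ?_
  rw [interior_Ioc] at hx
  rw [(hasDerivAt_runningMean hf hx.1.ne').deriv]
  exact div_pos (hgap x hx) (pow_pos hx.1 2)

theorem strictAntiOn_runningMean (hf : Continuous f) (ha : 0 < a)
    (hgap : ∀ x ∈ Ioi a, meanGap f x < 0) : StrictAntiOn (runningMean f) (Ici a) := by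
  refine strictAntiOn_of_deriv_neg (convex_Ici a)
    ((continuousOn_runningMean hf).mono (Ici_subset_Ioi.mpr ha)) fun x hx => ?_
  rw [interior_Ici] at hx
  have hx0 : 0 < x := ha.trans hx
  rw [(hasDerivAt_runningMean hf hx0.ne').deriv]
  exact div_neg_of_neg_of_pos (hgap x hx) (pow_pos hx0 2)

theorem monotoneOn_runningMean (hf : Continuous f) (ha : 0 < a)
    (hgap : ∀ x ∈ Ioi a, 0 ≤ meanGap f x) : MonotoneOn (runningMean f) (Ici a) := by
  have hderiv : ∀ x ∈ Ioi a, HasDerivAt (runningMean f) (meanGap f x / x ^ 2) x :=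
    fun x hx => hasDerivAt_runningMean hf (ha.trans hx).ne'
  refine monotoneOn_of_deriv_nonneg (convex_Ici a)
    ((continuousOn_runningMean hf).mono (Ici_subset_Ioi.mpr ha)) ?_ fun x hx => ?_
  · rw [interior_Ici]
    exact fun x hx => (hderiv x hx).differentiableAt.differentiableWithinAt
  · rw [interior_Ici] at hx
    rw [(hderiv x hx).deriv]
    exact div_nonneg (hgap x hx) (sq_nonneg x)

theorem meanGap_sub_meanGap (hf : Continuous f) (x y : ℝ) :
    meanGap f y - meanGap f x = y * f y - x * f x - ∫ t in x..y, f t := by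
  rw [meanGap, meanGap, ← integral_interval_sub_left (a := 0) (b := y) (c := x)
    (hf.intervalIntegrable _ _) (hf.intervalIntegrable _ _)]
  ring

theorem mul_sub_le_meanGap_sub (hf : Continuous f) (hxy : x ≤ y) (hle : ∀ t ∈ Icc x y, f t ≤ f y) :
    x * (f y - f x) ≤ meanGap f y - meanGap f x := by
  have h := integral_mono_on (μ := volume) hxy (hf.intervalIntegrable _ _)
    intervalIntegrable_const hle
  rw [intervalIntegral.integral_const, smul_eq_mul] at h
  rw [meanGap_sub_meanGap hf]
  nlinarith

theorem meanGap_sub_le_mul_sub (hf : Continuous f) (hxy : x ≤ y) (hge : ∀ t ∈ Icc x y, f y ≤ f t) :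
    meanGap f y - meanGap f x ≤ x * (f y - f x) := by
  have h := integral_mono_on (μ := volume) hxy intervalIntegrable_const
    (hf.intervalIntegrable _ _) hge
  rw [intervalIntegral.integral_const, smul_eq_mul] at h
  rw [meanGap_sub_meanGap hf]
  nlinarith

theorem meanGap_pos (hf : Continuous f) (hmono : StrictMonoOn f (Icc 0 m)) (hy : y ∈ Ioc 0 m) :
    0 < meanGap f y := by
  have hle : ∀ x ∈ Icc 0 y, ∀ t ∈ Icc 0 x, f t ≤ f x := fun x hx t ht =>
    hmono.monotoneOn ⟨ht.1, ht.2.trans (hx.2.trans hy.2)⟩ ⟨hx.1, hx.2.trans hy.2⟩ ht.2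
  have hhalf : y / 2 ∈ Icc 0 y := ⟨by linarith [hy.1], by linarith [hy.1]⟩
  have h₁ := mul_sub_le_meanGap_sub (x := 0) (y := y / 2) hf hhalf.1 (hle _ hhalf)
  have h₂ := mul_sub_le_meanGap_sub (x := y / 2) (y := y) hf hhalf.2 fun t ht =>
    hle y ⟨hy.1.le, le_rfl⟩ t ⟨hhalf.1.trans ht.1, ht.2⟩
  have hlt : f (y / 2) < f y :=
    hmono ⟨hhalf.1, hhalf.2.trans hy.2⟩ ⟨hy.1.le, hy.2⟩ (by linarith [hy.1])
  have h₀ : meanGap f 0 = 0 := by simp [meanGap]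
  nlinarith [hy.1]

theorem meanGap_strictAntiOn (hf : Continuous f) (hm : 0 < m) (hanti : StrictAntiOn f (Ici m)) :
    StrictAntiOn (meanGap f) (Ici m) := by
  intro x hx y hy hxy
  have hge : ∀ t ∈ Icc x y, f y ≤ f t := fun t ht =>
    hanti.antitoneOn (hx.trans ht.1) hy ht.2
  have := meanGap_sub_le_mul_sub hf hxy.le hge
  nlinarith [hanti hx hy hxy, hm.trans_le hx]

theorem pos_of_strictMonoOn_Ioc {p : ℝ → ℝ} (ha : 0 < a) (hmono : StrictMonoOn p (Ioc 0 a))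
    (h0 : Tendsto p (𝓝[>] 0) (𝓝 0)) : 0 < p a := by
  have hhalf : a / 2 ∈ Ioc 0 a := ⟨half_pos ha, half_le_self ha.le⟩
  have hle : ∀ᶠ t in 𝓝[>] 0, p t ≤ p (a / 2) := by
    filter_upwards [Ioo_mem_nhdsGT hhalf.1] with t ht
    exact (hmono ⟨ht.1, ht.2.le.trans hhalf.2⟩ hhalf ht.2).le
  exact (le_of_tendsto h0 hle).trans_lt (hmono hhalf ⟨ha, le_rfl⟩ (half_lt_self ha))

theorem exists_strictMonoOn_strictAntiOn_runningMean (hf : Continuous f) (hf0 : f 0 = 0)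
    (hm : 0 < m) (hmono : StrictMonoOn f (Icc 0 m)) (hanti : StrictAntiOn f (Ici m))
    (hlim : Tendsto f atTop (𝓝 0)) :
    ∃ x₀, 0 < x₀ ∧ StrictMonoOn (runningMean f) (Ioc 0 x₀) ∧
      StrictAntiOn (runningMean f) (Ici x₀) := by
  have hmean0 : Tendsto (runningMean f) (𝓝[>] 0) (𝓝 0) := by
    simpa only [hf0] using tendsto_runningMean_nhdsGT_zero hf
  have hgap : ∀ y ∈ Ioc 0 m, 0 < meanGap f y := fun _ => meanGap_pos hf hmono
  have hgapAnti := meanGap_strictAntiOn hf hm hanti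
  -- Otherwise the mean would be nondecreasing from its positive value at `m` on, yet tend to `0`.
  obtain ⟨X, hmX, hX⟩ : ∃ X, m < X ∧ meanGap f X < 0 := by
    by_contra! h
    have hpos : 0 < runningMean f m := pos_of_strictMonoOn_Ioc hm
      (strictMonoOn_runningMean hf fun x hx => hgap x (Ioo_subset_Ioc_self hx)) hmean0
    obtain ⟨x, hx, hxm⟩ := (((tendsto_runningMean_atTop hf hlim).eventually (gt_mem_nhds hpos)).and
      (eventually_ge_atTop m)).exists
    exact hx.not_ge (monotoneOn_runningMean hf hm h self_mem_Ici hxm hxm)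
  obtain ⟨x₀, hx₀, hgap₀⟩ := intermediate_value_Ioo' hmX.le (continuous_meanGap hf).continuousOn
    ⟨hX, hgap m ⟨hm, le_rfl⟩⟩
  refine ⟨x₀, hm.trans hx₀.1, strictMonoOn_runningMean hf fun x hx => ?_,
    strictAntiOn_runningMean hf (hm.trans hx₀.1) fun x hx => ?_⟩
  · rcases le_or_gt x m with h | h
    · exact hgap x ⟨hx.1, h⟩
    · exact hgap₀ ▸ hgapAnti h.le hx₀.1.le hx.2
  · exact hgap₀ ▸ hgapAnti hx₀.1.le (hx₀.1.le.trans hx.le) hx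

end RunningMean

section LevelSets

variable {p : ℝ → ℝ} {x x₀ c : ℝ}

theorem le_of_strictMonoOn_Ioc_of_strictAntiOn_Ici (hmono : StrictMonoOn p (Ioc 0 x₀))
    (hanti : StrictAntiOn p (Ici x₀)) (hx₀ : 0 < x₀) (hx : 0 < x) : p x ≤ p x₀ := by
  rcases le_or_gt x x₀ with h | h
  · exact hmono.monotoneOn ⟨hx, h⟩ ⟨hx₀, le_rfl⟩ h
  · exact hanti.antitoneOn self_mem_Ici (mem_Ici.mpr h.le) h.le

theorem exists_setOf_eq_eq_pair (hcont : ContinuousOn p (Ioi 0)) (hx₀ : 0 < x₀)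
    (hmono : StrictMonoOn p (Ioc 0 x₀)) (hanti : StrictAntiOn p (Ici x₀))
    (h0 : Tendsto p (𝓝[>] 0) (𝓝 0)) (htop : Tendsto p atTop (𝓝 0)) (hc : 0 < c)
    (hcx₀ : c < p x₀) :
    ∃ a b, 0 < a ∧ a < b ∧ {x | 0 < x ∧ p x = c} = {a, b} := by
  obtain ⟨a', ha'c, ha'⟩ :=
    ((h0.eventually (gt_mem_nhds hc)).and (Ioo_mem_nhdsGT hx₀)).exists
  obtain ⟨a, ha, hpa⟩ := intermediate_value_Ioo ha'.2.le
    (hcont.mono fun y hy => ha'.1.trans_le hy.1) ⟨ha'c, hcx₀⟩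
  obtain ⟨X, hXc, hX⟩ := ((htop.eventually (gt_mem_nhds hc)).and (eventually_gt_atTop x₀)).exists
  obtain ⟨b, hb, hpb⟩ := intermediate_value_Ioo' hX.le
    (hcont.mono fun y hy => hx₀.trans_le hy.1) ⟨hXc, hcx₀⟩
  have ha0 : 0 < a := ha'.1.trans ha.1
  refine ⟨a, b, ha0, ha.2.trans hb.1, Set.ext fun x => ⟨fun ⟨hx, hpx⟩ => ?_, ?_⟩⟩
  · rcases le_or_gt x x₀ with h | h
    · exact Or.inl (hmono.injOn ⟨hx, h⟩ ⟨ha0, ha.2.le⟩ (hpx.trans hpa.symm))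
    · exact Or.inr (hanti.injOn (mem_Ici.mpr h.le) (mem_Ici.mpr hb.1.le) (hpx.trans hpb.symm))
  · rintro (rfl | rfl)
    · exact ⟨ha0, hpa⟩
    · exact ⟨hx₀.trans hb.1, hpb⟩

end LevelSets

section FixedPoints

variable {f : ℝ → ℝ} {m c : ℝ}

theorem setOf_fixedPoint_eq_insert (hc : c ≠ 0) :
    {x | 0 ≤ x ∧ c * ∫ t in (0 : ℝ)..x, f t = x} =
      insert 0 {x | 0 < x ∧ runningMean f x = c⁻¹} := by
  ext x
  simp only [mem_ofPred_eq, mem_insert_iff]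
  rcases lt_trichotomy x 0 with hx | rfl | hx
  · simp [hx.not_ge, hx.ne, hx.not_gt]
  · simp
  · rw [runningMean, div_eq_iff hx.ne', ← eq_inv_mul_iff_mul_eq₀ hc]
    simp [hx, hx.le, hx.ne']

theorem exists_threshold_fixedPoints (hf : Continuous f) (hf0 : f 0 = 0)
    (hm : 0 < m) (hmono : StrictMonoOn f (Icc 0 m)) (hanti : StrictAntiOn f (Ici m))
    (hlim : Tendsto f atTop (𝓝 0)) :
    ∃ M, 0 < M ∧
      (∀ c, 0 < c → c * M < 1 → {x | 0 ≤ x ∧ c * ∫ t in (0 : ℝ)..x, f t = x} = {0}) ∧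
      (∀ c, 1 < c * M → ∃ a b, 0 < a ∧ a < b ∧
        {x | 0 ≤ x ∧ c * ∫ t in (0 : ℝ)..x, f t = x} = {0, a, b}) := by
  obtain ⟨x₀, hx₀, hmeanMono, hmeanAnti⟩ :=
    exists_strictMonoOn_strictAntiOn_runningMean hf hf0 hm hmono hanti hlim
  have hmean0 : Tendsto (runningMean f) (𝓝[>] 0) (𝓝 0) := by
    simpa only [hf0] using tendsto_runningMean_nhdsGT_zero hf
  have hM : 0 < runningMean f x₀ := pos_of_strictMonoOn_Ioc hx₀ hmeanMono hmean0
  refine ⟨runningMean f x₀, hM, fun c hc hcM => ?_, fun c hcM => ?_⟩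
  · have hMc : runningMean f x₀ < c⁻¹ := by rwa [← mul_one c⁻¹, lt_inv_mul_iff₀ hc]
    have hempty : {x | 0 < x ∧ runningMean f x = c⁻¹} = ∅ :=
      eq_empty_of_forall_notMem fun x ⟨hx, hpx⟩ => hMc.not_ge
        (hpx ▸ le_of_strictMonoOn_Ioc_of_strictAntiOn_Ici hmeanMono hmeanAnti hx₀ hx)
    rw [setOf_fixedPoint_eq_insert hc.ne', hempty, insert_empty_eq]
  · have hc : 0 < c := pos_of_mul_pos_left (one_pos.trans hcM) hM.le
    obtain ⟨a, b, ha, hab, hset⟩ := exists_setOf_eq_eq_pair (continuousOn_runningMean hf) hx₀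
      hmeanMono hmeanAnti hmean0 (tendsto_runningMean_atTop hf hlim) (inv_pos.mpr hc)
      ((inv_lt_iff_one_lt_mul₀' hc).mpr hcM)
    exact ⟨a, b, ha, hab, by rw [setOf_fixedPoint_eq_insert hc.ne', hset]⟩

end FixedPoints

section Profile

variable {u β t w T : ℝ}

theorem continuous_mul_exp_neg_rpow (hu : 0 < u) : Continuous fun t : ℝ => t * exp (-t ^ u) := by
  fun_prop (disch := positivity)

theorem hasDerivAt_mul_exp_neg_rpow (ht : 0 < t) :
    HasDerivAt (fun t => t * exp (-t ^ u)) (exp (-t ^ u) * (1 - u * t ^ u)) t := by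
  have h : HasDerivAt (fun t => t * exp (-t ^ u))
      (1 * exp (-t ^ u) + t * (exp (-t ^ u) * -(u * t ^ (u - 1)))) t :=
    (hasDerivAt_id' t).mul (hasDerivAt_rpow_const (Or.inl ht.ne')).neg.exp
  convert h using 1
  rw [rpow_sub_one ht.ne']
  field_simp
  ring

theorem mul_rpow_lt_one_iff (hu : 0 < u) (ht : 0 ≤ t) : u * t ^ u < 1 ↔ t < u⁻¹ ^ u⁻¹ := by
  rw [← rpow_lt_rpow_iff ht (by positivity) hu, rpow_inv_rpow (by positivity) hu.ne', ← one_div,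
    lt_div_iff₀' hu]

theorem one_lt_mul_rpow_iff (hu : 0 < u) (ht : 0 ≤ t) : 1 < u * t ^ u ↔ u⁻¹ ^ u⁻¹ < t := by
  rw [← rpow_lt_rpow_iff (by positivity) ht hu, rpow_inv_rpow (by positivity) hu.ne', ← one_div,
    div_lt_iff₀' hu]

theorem strictMonoOn_mul_exp_neg_rpow (hu : 0 < u) :
    StrictMonoOn (fun t => t * exp (-t ^ u)) (Icc 0 (u⁻¹ ^ u⁻¹)) := by
  refine strictMonoOn_of_deriv_pos (convex_Icc _ _) (continuous_mul_exp_neg_rpow hu).continuousOn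
    fun t ht => ?_
  rw [interior_Icc] at ht
  rw [(hasDerivAt_mul_exp_neg_rpow ht.1).deriv]
  exact mul_pos (exp_pos _) (sub_pos.mpr ((mul_rpow_lt_one_iff hu ht.1.le).mpr ht.2))

theorem strictAntiOn_mul_exp_neg_rpow (hu : 0 < u) :
    StrictAntiOn (fun t => t * exp (-t ^ u)) (Ici (u⁻¹ ^ u⁻¹)) := by
  refine strictAntiOn_of_deriv_neg (convex_Ici _) (continuous_mul_exp_neg_rpow hu).continuousOn
    fun t ht => ?_
  rw [interior_Ici] at ht
  have ht0 : 0 < t := (rpow_pos_of_pos (inv_pos.mpr hu) _).trans ht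
  rw [(hasDerivAt_mul_exp_neg_rpow ht0).deriv]
  exact mul_neg_of_pos_of_neg (exp_pos _) (sub_neg.mpr ((one_lt_mul_rpow_iff hu ht0.le).mpr ht))

theorem tendsto_mul_exp_neg_rpow_atTop (hu : 0 < u) :
    Tendsto (fun t => t * exp (-t ^ u)) atTop (𝓝 0) := by
  refine ((tendsto_rpow_mul_exp_neg_mul_atTop_nhds_zero u⁻¹ 1 one_pos).comp
    (tendsto_rpow_atTop hu)).congr' ?_
  filter_upwards [eventually_ge_atTop 0] with t ht
  simp [rpow_rpow_inv ht hu.ne']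

theorem continuous_sqrt_mul_exp (hu : 0 < u) :
    Continuous fun w : ℝ => √w * exp (-(β * √w) ^ u) := by
  fun_prop (disch := positivity)

theorem sqrt_mul_exp_eq (hβ : 0 < β) (w : ℝ) :
    √w * exp (-(β * √w) ^ u) = β⁻¹ * (β * √w * exp (-(β * √w) ^ u)) := by
  field_simp

theorem mul_sqrt_le_iff (hβ : 0 < β) (hT : 0 ≤ T) : β * √w ≤ T ↔ w ≤ (T / β) ^ 2 := by
  rw [← le_div_iff₀' hβ, sqrt_le_iff, and_iff_right (by positivity)]

theorem le_mul_sqrt_iff (hβ : 0 < β) (hT : 0 ≤ T) (hw : 0 ≤ w) : T ≤ β * √w ↔ (T / β) ^ 2 ≤ w := by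
  rw [← div_le_iff₀' hβ, le_sqrt (by positivity) hw]

theorem strictMonoOn_sqrt_mul_exp (hu : 0 < u) (hβ : 0 < β) :
    StrictMonoOn (fun w => √w * exp (-(β * √w) ^ u)) (Icc 0 ((u⁻¹ ^ u⁻¹ / β) ^ 2)) := by
  intro x hx y hy hxy
  have hT : 0 ≤ u⁻¹ ^ u⁻¹ := by positivity
  dsimp only
  rw [sqrt_mul_exp_eq hβ x, sqrt_mul_exp_eq hβ y]
  refine mul_lt_mul_of_pos_left (strictMonoOn_mul_exp_neg_rpow hu ?_ ?_
    (mul_lt_mul_of_pos_left (sqrt_lt_sqrt hx.1 hxy) hβ)) (inv_pos.mpr hβ)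
  · exact ⟨by positivity, (mul_sqrt_le_iff hβ hT).mpr hx.2⟩
  · exact ⟨by positivity, (mul_sqrt_le_iff hβ hT).mpr hy.2⟩

theorem strictAntiOn_sqrt_mul_exp (hu : 0 < u) (hβ : 0 < β) :
    StrictAntiOn (fun w => √w * exp (-(β * √w) ^ u)) (Ici ((u⁻¹ ^ u⁻¹ / β) ^ 2)) := by
  intro x hx y hy hxy
  have hT : 0 ≤ u⁻¹ ^ u⁻¹ := by positivity
  have hx0 : 0 ≤ x := (sq_nonneg _).trans hx
  have hy0 : 0 ≤ y := (sq_nonneg _).trans hy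
  dsimp only
  rw [sqrt_mul_exp_eq hβ x, sqrt_mul_exp_eq hβ y]
  refine mul_lt_mul_of_pos_left (strictAntiOn_mul_exp_neg_rpow hu ?_ ?_
    (mul_lt_mul_of_pos_left (sqrt_lt_sqrt hx0 hxy) hβ)) (inv_pos.mpr hβ)
  · exact (le_mul_sqrt_iff hβ hT hx0).mpr hx
  · exact (le_mul_sqrt_iff hβ hT hy0).mpr hy

theorem tendsto_sqrt_mul_exp_atTop (hu : 0 < u) (hβ : 0 < β) :
    Tendsto (fun w => √w * exp (-(β * √w) ^ u)) atTop (𝓝 0) := by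
  have h := ((tendsto_mul_exp_neg_rpow_atTop hu).comp
    (tendsto_sqrt_atTop.const_mul_atTop hβ)).const_mul β⁻¹
  rw [mul_zero] at h
  exact h.congr fun w => (sqrt_mul_exp_eq hβ w).symm

end Profile

theorem sq_mul_lt_one_of_lt_inv_sqrt {F K : ℝ} (hF : 0 ≤ F) (hK : 0 < K) (h : F < (√K)⁻¹) :
    F ^ 2 * K < 1 := by
  have hs := sqrt_pos.mpr hK
  have h1 : √K * F < 1 := (lt_inv_mul_iff₀ hs).mp (by rwa [mul_one])
  nlinarith [sq_sqrt hK.le, mul_nonneg hs.le hF]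

theorem one_lt_sq_mul_of_inv_sqrt_lt {F K : ℝ} (hK : 0 < K) (h : (√K)⁻¹ < F) :
    1 < F ^ 2 * K := by
  have hs := sqrt_pos.mpr hK
  have h1 : 1 < √K * F := (inv_lt_iff_one_lt_mul₀' hs).mp h
  nlinarith [sq_sqrt hK.le]

theorem critical_constant_exists (u : ℝ) (hu : 0 < u)
    (β α : ℝ)
    (hβ : β = (Gamma (3 / u) / Gamma (1 / u)) ^ ((1 : ℝ) / 2))
    (hα : α = β * u / (2 * Gamma (1 / u)))
    (g : ℝ → ℝ → ℝ)
    (hg : ∀ F x : ℝ, g F x = F ^ 2 * α * ∫ w in (0 : ℝ)..x, Real.sqrt w * Real.exp (-(β * Real.sqrt w) ^ u)) :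
    ∃ Fc : ℝ, 0 < Fc ∧
      (∀ F : ℝ, 0 < F → F < Fc → {x : ℝ | 0 ≤ x ∧ g F x = x} = {0}) ∧
      (∀ F : ℝ, Fc < F → ∃ l₁ xs : ℝ, 0 < l₁ ∧ l₁ < xs ∧
          {x : ℝ | 0 ≤ x ∧ g F x = x} = {0, l₁, xs}) := by
  have hΓ : ∀ k : ℝ, 0 < k → 0 < Gamma (k / u) := fun k hk => Gamma_pos_of_pos (by positivity)
  have hβ0 : 0 < β := hβ ▸ rpow_pos_of_pos (div_pos (hΓ 3 three_pos) (hΓ 1 one_pos)) _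
  have hα0 : 0 < α := hα ▸ div_pos (mul_pos hβ0 hu) (mul_pos two_pos (hΓ 1 one_pos))
  obtain ⟨M, hM, hsub, hsuper⟩ := exists_threshold_fixedPoints (continuous_sqrt_mul_exp hu)
    (by simp) (by positivity) (strictMonoOn_sqrt_mul_exp hu hβ0) (strictAntiOn_sqrt_mul_exp hu hβ0)
    (tendsto_sqrt_mul_exp_atTop hu hβ0)
  have hK : 0 < α * M := mul_pos hα0 hM
  refine ⟨(√(α * M))⁻¹, by positivity, fun F hF hFc => ?_, fun F hFc => ?_⟩
  · have hlt : F ^ 2 * α * M < 1 := by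
      simpa only [mul_assoc] using sq_mul_lt_one_of_lt_inv_sqrt hF.le hK hFc
    simp only [hg]
    exact hsub _ (by positivity) hlt
  · have hgt : 1 < F ^ 2 * α * M := by
      simpa only [mul_assoc] using one_lt_sq_mul_of_inv_sqrt_lt hK hFc
    simp only [hg]
    exact hsuper _ hgt
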